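/- Let G be a connected unicyclic graph with 2m vertices and matching number m, where m ≥ 2, and let D be any orientation of G. Then M₁(D) ≤ (1/2)(m² + 7m − 2). -/

import Mathlib

/-
Since `M₁(D) = ½ ∑_v ((d⁺_v)² + (d⁻_v)²)` and `(d⁺_v)² + (d⁻_v)² ≤ d_v²`, with a loss of
at least 2 at a vertex that is neither a source nor a sink, it suffices to show, for a connected
unicyclic graph `G` on `2m` vertices with a perfect matching `v ↦ p v`, that `∑_v d_v² ≤ m² + 7m`,
and `∑_v d_v² ≤ m² + 7m - 2` when `G` is bipartite (which it is when `D` is a sink–source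
orientation).

In a unicyclic graph every vertex set `S` spans at most `|S|` edges. Applied to the closed
neighbourhood of `u` (resp. of `u` and `v`), with the matching edges it contains, this gives
`d_u ≤ m + 1` and `d_u + d_v ≤ m + 3`. The partner of a leaf is not a leaf, so there are
`L ≤ m` leaves. If `a` is the maximum degree, every other degree lies in `[1, b]` for
`b = min(a, m + 3 - a)`, and `d² ≤ (b + 2) d - 2b` on `[2, b]` bounds `∑_v d_v²` by
`8m + (a - b)(a - 2) + (b - 1) L`, which is at most `m² + 7m`. In the bipartite case `a ≤ m`,
and if `a = m` one of the `m` leaves is missing, which gives the extra 2.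
-/

open Finset

attribute [local instance] Classical.propDecidable

/-- The out-degree of `u` in the digraph on `V` with arc relation `A`. -/
noncomputable def outDeg {V : Type*} [Fintype V] (A : V → V → Prop) (u : V) : ℕ :=
  (Finset.univ.filter fun v => A u v).card

/-- The in-degree of `u` in the digraph on `V` with arc relation `A`. -/
noncomputable def inDeg {V : Type*} [Fintype V] (A : V → V → Prop) (u : V) : ℕ :=
  (Finset.univ.filter fun v => A v u).card

/-- The first Zagreb index of a digraph: `(1/2) · ∑_{uv ∈ A} (d⁺_u + d⁻_v)`. -/
noncomputable def M1D {V : Type*} [Fintype V] (A : V → V → Prop) : ℚ :=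
  (1 / 2) * ∑ u : V, ∑ v : V, if A u v then ((outDeg A u : ℚ) + (inDeg A v : ℚ)) else 0

/-- `A` is an orientation of the simple graph `G`: every edge of `G` is replaced by
exactly one of the two possible arcs. -/
def IsOrientation {V : Type*} (G : SimpleGraph V) (A : V → V → Prop) : Prop :=
  (∀ u v, G.Adj u v ↔ (A u v ∨ A v u)) ∧ ∀ u v, ¬(A u v ∧ A v u)

/-- A sink-source orientation: every vertex has out-degree 0 or in-degree 0. -/
def IsSinkSource {V : Type*} [Fintype V] (A : V → V → Prop) : Prop :=
  ∀ u, outDeg A u = 0 ∨ inDeg A u = 0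

/-- The first Zagreb index of a simple graph: `∑_{uv ∈ E(G)} (d_G(u) + d_G(v))`. -/
noncomputable def M1G {V : Type*} [Fintype V] (G : SimpleGraph V) : ℕ :=
  ∑ e ∈ G.edgeFinset,
    Sym2.lift ⟨fun u v => G.degree u + G.degree v, fun _ _ => Nat.add_comm _ _⟩ e

/-- `M` is a matching of `G`: a set of edges of `G`, no two of which share a vertex. -/
def IsMatchingSet {V : Type*} (G : SimpleGraph V) (M : Finset (Sym2 V)) : Prop :=
  (∀ e ∈ M, e ∈ G.edgeSet) ∧ ∀ e ∈ M, ∀ f ∈ M, e ≠ f → ∀ v : V, ¬(v ∈ e ∧ v ∈ f)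

/-- The matching number of `G` is `m`: there is a matching with `m` edges and
every matching has at most `m` edges. -/
def MatchingNumberIs {V : Type*} (G : SimpleGraph V) (m : ℕ) : Prop :=
  (∃ M, IsMatchingSet G M ∧ M.card = m) ∧ ∀ M, IsMatchingSet G M → M.card ≤ m

theorem Finset.card_le_two_mul_card_image_sym2 {V : Type*} (p : V → V) (T : Finset V) :
    #T ≤ 2 * #(T.image fun x => s(x, p x)) := by
  refine Finset.card_le_mul_card_image T 2 fun e he => ?_
  obtain ⟨y, -, rfl⟩ := Finset.mem_image.1 he
  refine (Finset.card_le_card fun x hx => ?_).trans (Finset.card_le_two (a := y) (b := p y))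
  rcases Sym2.eq_iff.1 (Finset.mem_filter.1 hx).2 with ⟨rfl, -⟩ | ⟨rfl, -⟩ <;> simp

theorem Function.Involutive.two_mul_card_le {V : Type*} [Fintype V] {p : V → V}
    (hp : Function.Involutive p) (T : Finset V) :
    2 * #T ≤ Fintype.card V + #(T.filter (p · ∈ T)) := by
  have hout : #(T.filter (p · ∉ T)) ≤ #Tᶜ :=
    Finset.card_le_card_of_injOn p (fun x hx => by simpa using (Finset.mem_filter.1 hx).2)
      hp.injective.injOn
  have := Finset.card_filter_add_card_filter_not (s := T) (p · ∈ T)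
  rw [Finset.card_compl] at hout
  have := T.card_le_univ
  omega

theorem IsMatchingSet.exists_involutive_adj {V : Type*} [Fintype V] {G : SimpleGraph V}
    {M : Finset (Sym2 V)} (hM : IsMatchingSet G M) (hcard : Fintype.card V = 2 * #M) :
    ∃ p : V → V, Function.Involutive p ∧ ∀ v, G.Adj v (p v) := by
  have hunique : ∀ e ∈ M, ∀ f ∈ M, ∀ v, v ∈ e → v ∈ f → e = f := fun e he f hf v hve hvf =>
    by_contra fun hef => hM.2 e he f hf hef v ⟨hve, hvf⟩
  have hcover : M.biUnion Sym2.toFinset = univ := by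
    refine Finset.eq_univ_of_card _ ?_
    rw [Finset.card_biUnion fun e he f hf hef => Finset.disjoint_left.2 fun v hve hvf =>
      hef (hunique e he f hf v (Sym2.mem_toFinset.1 hve) (Sym2.mem_toFinset.1 hvf))]
    rw [Finset.sum_congr rfl fun e he => Sym2.card_toFinset_of_not_isDiag e
      (SimpleGraph.not_isDiag_of_mem_edgeSet G (hM.1 e he)), Finset.sum_const, smul_eq_mul,
      hcard, mul_comm]
  have hpartner : ∀ v, ∃ w, s(v, w) ∈ M := fun v => by
    obtain ⟨e, he, hve⟩ := Finset.mem_biUnion.1 (hcover ▸ Finset.mem_univ v)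
    obtain ⟨w, rfl⟩ := Sym2.mem_iff_exists.1 (Sym2.mem_toFinset.1 hve)
    exact ⟨w, he⟩
  choose p hp using hpartner
  refine ⟨p, fun v => ?_, fun v => hM.1 _ (hp v)⟩
  have := hunique _ (hp (p v)) _ (Sym2.eq_swap ▸ hp v) (p v) (Sym2.mem_mk_left _ _)
    (Sym2.mem_mk_left _ _)
  exact Sym2.congr_right.1 this

namespace SimpleGraph

variable {V : Type*} {G : SimpleGraph V} {p : V → V}

theorem Preconnected.mem_of_adj_closed (hG : G.Preconnected) {S : Set V}
    (hS : ∀ ⦃u v⦄, G.Adj u v → u ∈ S → v ∈ S) {u : V} (hu : u ∈ S) (v : V) : v ∈ S := by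
  obtain ⟨w⟩ := hG u v
  induction w with
  | nil => exact hu
  | cons h _ ih => exact ih (hS h hu)

theorem IsBipartiteWith.card_eq_card {s t : Finset V} (hst : G.IsBipartiteWith ↑s ↑t)
    (hp : Function.Involutive p) (hpG : ∀ v, G.Adj v (p v)) : #s = #t :=
  le_antisymm
    (Finset.card_le_card_of_injOn p (fun _ hx => hst.mem_of_mem_adj hx (hpG _))
      hp.injective.injOn)
    (Finset.card_le_card_of_injOn p (fun _ hx => hst.symm.mem_of_mem_adj hx (hpG _))
      hp.injective.injOn)

variable [Fintype V]

/-- Deleting the edges `F` and joining the vertices of `S` by a star keeps `G` connected,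
so `|V| - 1 ≤ (|E| - |F|) + (|S| - 1)`. -/
theorem Connected.card_add_card_le (hG : G.Connected) {F : Finset (Sym2 V)} {S : Finset V}
    (hF : F ⊆ G.edgeFinset) (hFS : ∀ e ∈ F, ∀ x ∈ e, x ∈ S) (hS : S.Nonempty) :
    #F + Fintype.card V ≤ #G.edgeFinset + #S := by
  obtain ⟨s₀, hs₀⟩ := hS
  let star : Finset (Sym2 V) := (S.erase s₀).image (s(s₀, ·))
  let H := G.deleteEdges ↑F ⊔ fromEdgeSet ↑star
  have hreach : ∀ x ∈ S, H.Reachable s₀ x := by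
    intro x hx
    by_cases hxs : x = s₀
    · subst hxs; rfl
    · refine Adj.reachable (Or.inr ⟨?_, Ne.symm hxs⟩)
      exact Finset.mem_coe.2 (Finset.mem_image_of_mem _ (Finset.mem_erase.2 ⟨hxs, hx⟩))
  have hH : H.Connected := by
    refine (connected_iff_exists_forall_reachable H).2 ⟨s₀, ?_⟩
    refine hG.preconnected.mem_of_adj_closed (S := {x | H.Reachable s₀ x}) ?_ (Reachable.refl s₀)
    intro u v huv hu
    by_cases he : s(u, v) ∈ F
    · exact hreach v (hFS _ he v (Sym2.mem_mk_right u v))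
    · exact hu.trans (Adj.reachable (Or.inl ((deleteEdges_adj ..).2 ⟨huv, he⟩)))
  have hsub : H.edgeFinset ⊆ (G.edgeFinset \ F) ∪ star := by
    intro e he
    simp only [H, mem_edgeFinset, edgeSet_sup, edgeSet_deleteEdges, edgeSet_fromEdgeSet,
      Set.mem_union, Set.mem_sdiff, Finset.mem_coe] at he
    rcases he with ⟨he, heF⟩ | ⟨he, -⟩
    · exact Finset.mem_union_left _ (Finset.mem_sdiff.2 ⟨mem_edgeFinset.2 he, heF⟩)
    · exact Finset.mem_union_right _ he
  have hcardH := hH.card_vert_le_card_edgeSet_add_one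
  rw [Nat.card_eq_fintype_card, Nat.card_eq_fintype_card, ← edgeFinset_card] at hcardH
  have h1 := (Finset.card_le_card hsub).trans (Finset.card_union_le _ _)
  have h2 : #star ≤ #S - 1 :=
    Finset.card_image_le.trans (Finset.card_erase_of_mem hs₀).le
  have h3 := Finset.card_sdiff_add_card_eq_card hF
  have h4 := Finset.card_pos.2 ⟨s₀, hs₀⟩
  omega

def IsUnicyclic (G : SimpleGraph V) : Prop :=
  G.Connected ∧ #G.edgeFinset = Fintype.card V

theorem eq_of_adj_of_degree_eq_one {x y z : V} (hx : G.degree x = 1) (hxy : G.Adj x y)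
    (hxz : G.Adj x z) : z = y :=
  (degree_eq_one_iff_existsUnique_adj.1 hx).unique hxz hxy

noncomputable def leafFinset (G : SimpleGraph V) : Finset V :=
  univ.filter fun v => G.degree v = 1

theorem Preconnected.degree_ne_one_of_degree_eq_one (hG : G.Preconnected)
    (hV : 2 < Fintype.card V) (hp : Function.Involutive p) (hpG : ∀ v, G.Adj v (p v)) {x : V}
    (hx : G.degree x = 1) : G.degree (p x) ≠ 1 := by
  intro hpx
  have hclosed : ∀ ⦃u v⦄, G.Adj u v → u ∈ ({x, p x} : Finset V) → v ∈ ({x, p x} : Finset V) := by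
    intro u v huv hu
    rcases Finset.mem_insert.1 hu with rfl | hu
    · simp [eq_of_adj_of_degree_eq_one hx (hpG u) huv]
    rw [Finset.mem_singleton.1 hu] at huv
    simp [eq_of_adj_of_degree_eq_one hpx (hpG (p x)) huv, hp x]
  have hall : univ ⊆ ({x, p x} : Finset V) := fun v _ =>
    Finset.mem_coe.1 <| hG.mem_of_adj_closed (S := ↑({x, p x} : Finset V)) hclosed
      (Finset.mem_insert_self x _) v
  have := (Finset.card_le_card hall).trans Finset.card_le_two
  rw [Finset.card_univ] at this
  omega

theorem Preconnected.two_mul_card_leafFinset_le (hG : G.Preconnected)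
    (hV : 2 < Fintype.card V) (hp : Function.Involutive p) (hpG : ∀ v, G.Adj v (p v)) :
    2 * #G.leafFinset ≤ Fintype.card V := by
  have : #G.leafFinset ≤ #G.leafFinsetᶜ := by
    refine Finset.card_le_card_of_injOn p (fun x hx => ?_) hp.injective.injOn
    simp only [leafFinset, Finset.coe_filter, Set.mem_ofPred_eq, Finset.mem_univ, true_and,
      Finset.mem_coe, Finset.mem_compl, Finset.mem_filter] at hx ⊢
    exact hG.degree_ne_one_of_degree_eq_one hV hp hpG hx
  rw [Finset.card_compl] at this
  have := G.leafFinset.card_le_univ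
  omega

theorem card_leafFinset_add_degree_le (hp : Function.Involutive p) (hpG : ∀ v, G.Adj v (p v))
    {u : V} (hu : 2 ≤ G.degree u) : #G.leafFinset + G.degree u ≤ Fintype.card V := by
  have hsub : insert u ((G.neighborFinset u).erase (p u)) ⊆ G.leafFinsetᶜ := by
    intro x hx
    simp only [leafFinset, Finset.mem_compl, Finset.mem_filter, Finset.mem_univ, true_and]
    rcases Finset.mem_insert.1 hx with rfl | hx
    · omega
    · intro hleaf
      obtain ⟨hxp, hux⟩ := Finset.mem_erase.1 hx
      have hu := eq_of_adj_of_degree_eq_one hleaf (hpG x) ((mem_neighborFinset ..).1 hux).symm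
      exact hxp (hu ▸ (hp x).symm)
  have hcard : #(insert u ((G.neighborFinset u).erase (p u))) = G.degree u := by
    rw [Finset.card_insert_of_notMem (by simp),
      Finset.card_erase_of_mem ((mem_neighborFinset ..).2 (hpG u)), card_neighborFinset_eq_degree]
    omega
  have := Finset.card_le_card hsub
  rw [hcard, Finset.card_compl] at this
  have := G.leafFinset.card_le_univ
  omega

/-- The sum of `d² + 2b ≤ (b + 2) d` for `2 ≤ d ≤ b`, of `1 + 2b = (b + 2) + (b - 1)` at the
leaves, and of `a² + 2b = (b + 2) a + (a - b)(a - 2)` at `u₀`, where `a = G.degree u₀`. -/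
theorem sum_sq_degree_add_le (hmin : ∀ v, 1 ≤ G.degree v) {u₀ : V} (hu₀ : 2 ≤ G.degree u₀)
    (b : ℤ) (hb : ∀ v ≠ u₀, (G.degree v : ℤ) ≤ b) :
    ∑ v, (G.degree v : ℤ) ^ 2 + 2 * b * Fintype.card V ≤ (b + 2) * ∑ v, (G.degree v : ℤ) +
      (G.degree u₀ - b) * (G.degree u₀ - 2) + (b - 1) * #G.leafFinset := by
  have hpoint : ∀ v, (G.degree v : ℤ) ^ 2 + 2 * b ≤ (b + 2) * G.degree v +
      (if v = u₀ then (G.degree u₀ - b) * (G.degree u₀ - 2) else 0) +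
      (b - 1) * (if G.degree v = 1 then 1 else 0) := by
    intro v
    by_cases hv : v = u₀
    · subst hv
      rw [if_pos rfl, if_neg (by omega)]
      exact le_of_eq (by ring)
    rw [if_neg hv]
    have hdb := hb v hv
    split_ifs with h
    · rw [h] at hdb ⊢
      push_cast
      linarith
    · have hd2 : (2 : ℤ) ≤ G.degree v := by
        have := hmin v
        omega
      nlinarith
  have hsum := Finset.sum_le_sum fun v (_ : v ∈ univ) => hpoint v
  simp only [Finset.sum_add_distrib, Finset.sum_const, Finset.card_univ, nsmul_eq_mul,
    ← Finset.mul_sum, Finset.sum_ite_eq', Finset.mem_univ, if_true, Finset.sum_boole] at hsum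
  rw [leafFinset]
  linarith

namespace IsUnicyclic

theorem card_le (hG : G.IsUnicyclic) {F : Finset (Sym2 V)} {S : Finset V}
    (hF : F ⊆ G.edgeFinset) (hFS : ∀ e ∈ F, ∀ x ∈ e, x ∈ S) : #F ≤ #S := by
  rcases F.eq_empty_or_nonempty with rfl | ⟨e, he⟩
  · simp
  obtain ⟨x, hx⟩ : ∃ x, x ∈ e := e.ind (fun x _ => ⟨x, Sym2.mem_mk_left _ _⟩)
  have := hG.1.card_add_card_le hF hFS ⟨x, hFS e he x hx⟩
  rw [hG.2] at this
  omega

theorem sum_degrees_eq (hG : G.IsUnicyclic) : ∑ v, G.degree v = 2 * Fintype.card V := by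
  rw [sum_degrees_eq_twice_card_edges, hG.2]

/-- The closed neighbourhood `U` of `W` contains at least `|U| - |V| / 2 - |W|` matching edges
avoiding `W`; together with the edges at `W` they are at most `|U|` in number. -/
theorem two_mul_card_biUnion_incidenceFinset_le (hG : G.IsUnicyclic)
    (hp : Function.Involutive p) (hpG : ∀ v, G.Adj v (p v)) (W : Finset V) :
    2 * #(W.biUnion fun w => G.incidenceFinset w) ≤ Fintype.card V + 2 * #W := by
  set U := W ∪ W.biUnion fun w => G.neighborFinset w
  set B := U.filter (p · ∈ U)
  set B' := B \ (W ∪ W.image p)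
  set I := B'.image fun x => s(x, p x)
  set E := W.biUnion fun w => G.incidenceFinset w
  have hU : 2 * #U ≤ Fintype.card V + #B := hp.two_mul_card_le U
  have hB : #B ≤ #B' + 2 * #W := by
    have h1 : B ⊆ B' ∪ (W ∪ W.image p) := fun x hx => by
      by_cases h : x ∈ W ∪ W.image p
      · exact Finset.mem_union_right _ h
      · exact Finset.mem_union_left _ (Finset.mem_sdiff.2 ⟨hx, h⟩)
    have h2 := (Finset.card_le_card h1).trans (Finset.card_union_le _ _)
    have h3 := (Finset.card_union_le W (W.image p)).trans
      (Nat.add_le_add_left Finset.card_image_le _)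
    omega
  have hI : #B' ≤ 2 * #I := B'.card_le_two_mul_card_image_sym2 p
  have hinc : ∀ e ∈ E, e ∈ G.edgeSet ∧ ∃ w ∈ W, ∃ y, G.Adj w y ∧ e = s(w, y) := by
    intro e he
    obtain ⟨w, hw, hwe⟩ := Finset.mem_biUnion.1 he
    obtain ⟨he, hwe⟩ := (G.mem_incidenceFinset _ _).1 hwe
    obtain ⟨y, rfl⟩ := Sym2.mem_iff_exists.1 hwe
    exact ⟨he, w, hw, y, he, rfl⟩
  have hmatch : ∀ e ∈ I, ∃ x ∈ B', e = s(x, p x) := fun e he => by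
    obtain ⟨x, hx, rfl⟩ := Finset.mem_image.1 he
    exact ⟨x, hx, rfl⟩
  have hdisj : Disjoint E I := by
    refine Finset.disjoint_left.2 fun e hE hI => ?_
    obtain ⟨-, w, hw, y, -, rfl⟩ := hinc e hE
    obtain ⟨x, hx, hxe⟩ := hmatch _ hI
    have hx' := (Finset.mem_sdiff.1 hx).2
    rcases Sym2.mem_iff.1 (hxe ▸ Sym2.mem_mk_left w y : w ∈ s(x, p x)) with rfl | rfl
    · exact hx' (Finset.mem_union_left _ hw)
    · exact hx' (Finset.mem_union_right _ (Finset.mem_image.2 ⟨_, hw, hp x⟩))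
  have hsub : E ∪ I ⊆ G.edgeFinset := by
    intro e he
    rcases Finset.mem_union.1 he with he | he
    · exact mem_edgeFinset.2 (hinc e he).1
    · obtain ⟨x, -, rfl⟩ := hmatch e he
      exact mem_edgeFinset.2 (hpG x)
  have hends : ∀ e ∈ E ∪ I, ∀ x ∈ e, x ∈ U := by
    intro e he x hx
    rcases Finset.mem_union.1 he with he | he
    · obtain ⟨-, w, hw, y, hwy, rfl⟩ := hinc e he
      rcases Sym2.mem_iff.1 hx with rfl | rfl
      · exact Finset.mem_union_left _ hw
      · exact Finset.mem_union_right _ (Finset.mem_biUnion.2 ⟨w, hw, by simpa using hwy⟩)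
    · obtain ⟨y, hy, rfl⟩ := hmatch e he
      have hy := Finset.mem_filter.1 (Finset.mem_sdiff.1 hy).1
      rcases Sym2.mem_iff.1 hx with rfl | rfl
      exacts [hy.1, hy.2]
  have hEI := hG.card_le hsub hends
  rw [Finset.card_union_of_disjoint hdisj] at hEI
  omega

theorem two_mul_degree_le (hG : G.IsUnicyclic) (hp : Function.Involutive p)
    (hpG : ∀ v, G.Adj v (p v)) (u : V) : 2 * G.degree u ≤ Fintype.card V + 2 := by
  simpa [card_incidenceFinset_eq_degree] using hG.two_mul_card_biUnion_incidenceFinset_le hp hpG {u}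

theorem two_mul_degree_add_degree_le (hG : G.IsUnicyclic)
    (hp : Function.Involutive p) (hpG : ∀ v, G.Adj v (p v)) {u v : V} (huv : u ≠ v) :
    2 * (G.degree u + G.degree v) ≤ Fintype.card V + 6 := by
  have h := hG.two_mul_card_biUnion_incidenceFinset_le hp hpG {u, v}
  rw [Finset.biUnion_insert, Finset.singleton_biUnion, Finset.card_pair huv] at h
  have hinter : #(G.incidenceFinset u ∩ G.incidenceFinset v) ≤ 1 := by
    refine Finset.card_le_one.2 fun e he f hf => ?_
    simp only [Finset.mem_inter, mem_incidenceFinset] at he hf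
    have := G.incidenceSet_inter_incidenceSet_subset huv
    exact (this he).trans (this hf).symm
  have := Finset.card_union_add_card_inter (G.incidenceFinset u) (G.incidenceFinset v)
  simp only [card_incidenceFinset_eq_degree] at this
  omega

theorem sum_sq_degree_add_two_mul_le (hG : G.IsUnicyclic) {m : ℕ} (hm : 2 ≤ m)
    (hn : Fintype.card V = 2 * m) (hp : Function.Involutive p)
    (hpG : ∀ v, G.Adj v (p v)) {k : ℕ} (hk : k ≤ 1) {u₀ : V}
    (hmax : ∀ v, G.degree v ≤ G.degree u₀) (ha : G.degree u₀ + k ≤ m + 1)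
    (hL : #G.leafFinset + G.degree u₀ + k ≤ 2 * m) :
    ∑ v, G.degree v ^ 2 + 2 * k ≤ m ^ 2 + 7 * m := by
  have hmin : ∀ v, 1 ≤ G.degree v := fun v => (G.degree_pos_iff_exists_adj v).2 ⟨p v, hpG v⟩
  have hsum := hG.sum_degrees_eq
  by_cases ha2 : G.degree u₀ ≤ 2
  · have : ∑ v, G.degree v ^ 2 ≤ ∑ v, 2 * G.degree v :=
      Finset.sum_le_sum fun v _ => by nlinarith [hmax v]
    rw [← Finset.mul_sum, hsum, hn] at this
    nlinarith
  have hLm := hG.1.preconnected.two_mul_card_leafFinset_le (by omega) hp hpG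
  have hpair : ∀ v ≠ u₀, (G.degree v : ℤ) ≤ m + 3 - G.degree u₀ := fun v hv => by
    have := hG.two_mul_degree_add_degree_le hp hpG hv
    omega
  -- the other degrees are at most `b = a` and at most `b = m + 3 - a`
  have hQa := sum_sq_degree_add_le hmin (u₀ := u₀) (by omega) (G.degree u₀) fun v _ => by
    exact_mod_cast hmax v
  have hQb := sum_sq_degree_add_le hmin (u₀ := u₀) (by omega) _ hpair
  have hsumZ : ∑ v, (G.degree v : ℤ) = 4 * m := by
    rw [hn] at hsum
    exact_mod_cast (by omega : ∑ v, G.degree v = 4 * m)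
  rw [hsumZ, hn] at hQa hQb
  zify at *
  set a : ℤ := (G.degree u₀ : ℤ)
  set L : ℤ := (#G.leafFinset : ℤ)
  by_cases hbr : 2 * a ≤ m + 3
  · nlinarith
  · nlinarith

theorem sum_sq_degree_le (hG : G.IsUnicyclic) {m : ℕ} (hm : 2 ≤ m)
    (hn : Fintype.card V = 2 * m) (hp : Function.Involutive p) (hpG : ∀ v, G.Adj v (p v)) :
    ∑ v, G.degree v ^ 2 ≤ m ^ 2 + 7 * m := by
  have : Nonempty V := Fintype.card_pos_iff.1 (by omega)
  obtain ⟨u₀, hu₀⟩ := G.exists_maximal_degree_vertex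
  have hmax : ∀ v, G.degree v ≤ G.degree u₀ := fun v => hu₀ ▸ G.degree_le_maxDegree v
  have ha := hG.two_mul_degree_le hp hpG u₀
  have hL : #G.leafFinset + G.degree u₀ ≤ 2 * m := by
    by_cases h : 2 ≤ G.degree u₀
    · exact hn ▸ card_leafFinset_add_degree_le hp hpG h
    · have := hG.1.preconnected.two_mul_card_leafFinset_le (by omega) hp hpG
      omega
  simpa using hG.sum_sq_degree_add_two_mul_le hm hn hp hpG (k := 0) (by omega) hmax (by omega) hL

/-- A vertex adjacent to the whole of `t` is matched to the only possible leaf in `t`, and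
the degree sum `2m` of `s` forces a second non-leaf in `s`. -/
theorem card_leafFinset_lt_of_isBipartiteWith (hG : G.IsUnicyclic) {m : ℕ} (hm : 2 ≤ m)
    (hn : Fintype.card V = 2 * m) (hp : Function.Involutive p) (hpG : ∀ v, G.Adj v (p v))
    {s t : Finset V} (hst : G.IsBipartiteWith ↑s ↑t) (hs : #s = m) (ht : #t = m) {u₀ : V}
    (hu₀ : u₀ ∈ s) (ha : G.degree u₀ = m) : #G.leafFinset < m := by
  have hN : G.neighborFinset u₀ = t :=
    Finset.eq_of_subset_of_card_le (isBipartiteWith_neighborFinset_subset hst hu₀)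
      (by rw [ht, card_neighborFinset_eq_degree, ha])
  obtain ⟨w, hw, hw2⟩ : ∃ w ∈ s.erase u₀, 1 < G.degree w := by
    refine Finset.exists_lt_of_sum_lt ?_
    have hsum := isBipartiteWith_sum_degrees_eq_card_edges hst
    rw [hG.2, hn, ← Finset.add_sum_erase s _ hu₀, ha] at hsum
    rw [Finset.sum_const, smul_eq_mul, mul_one, Finset.card_erase_of_mem hu₀, hs]
    omega
  have hdisj := Finset.disjoint_coe.1 hst.disjoint
  have hpu₀ : p u₀ ∈ t := hN ▸ (mem_neighborFinset ..).2 (hpG u₀)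
  have hsub : insert u₀ (insert w (t.erase (p u₀))) ⊆ G.leafFinsetᶜ := by
    intro x hx
    simp only [leafFinset, Finset.mem_compl, Finset.mem_filter, Finset.mem_univ, true_and]
    rcases Finset.mem_insert.1 hx with rfl | hx
    · omega
    rcases Finset.mem_insert.1 hx with rfl | hx
    · omega
    intro hleaf
    obtain ⟨hxp, hxt⟩ := Finset.mem_erase.1 hx
    have hxu₀ : G.Adj x u₀ := ((mem_neighborFinset ..).1 (hN ▸ hxt)).symm
    exact hxp (eq_of_adj_of_degree_eq_one hleaf (hpG x) hxu₀ ▸ (hp x).symm)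
  have hw' := Finset.mem_erase.1 hw
  have hcard : #(insert u₀ (insert w (t.erase (p u₀)))) = m + 1 := by
    rw [Finset.card_insert_of_notMem, Finset.card_insert_of_notMem, Finset.card_erase_of_mem hpu₀,
      ht]
    · omega
    · exact fun h => Finset.disjoint_left.1 hdisj hw'.2 (Finset.mem_of_mem_erase h)
    · simp only [Finset.mem_insert, Finset.mem_erase, not_or]
      exact ⟨hw'.1.symm, fun h => Finset.disjoint_left.1 hdisj hu₀ h.2⟩
  have := Finset.card_le_card hsub
  rw [hcard, Finset.card_compl, hn] at this
  have := G.leafFinset.card_le_univ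
  omega

theorem sum_sq_degree_add_two_le_of_isBipartiteWith (hG : G.IsUnicyclic) {m : ℕ} (hm : 2 ≤ m)
    (hn : Fintype.card V = 2 * m) (hp : Function.Involutive p) (hpG : ∀ v, G.Adj v (p v))
    {s : Finset V} (hst : G.IsBipartiteWith ↑s ↑sᶜ) :
    ∑ v, G.degree v ^ 2 + 2 ≤ m ^ 2 + 7 * m := by
  have hs : #s = m := by
    have := hst.card_eq_card hp hpG
    rw [Finset.card_compl] at this
    have := s.card_le_univ
    omega
  have hsc : #sᶜ = m := by rw [Finset.card_compl, hs, hn]; omega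
  have : Nonempty V := Fintype.card_pos_iff.1 (by omega)
  obtain ⟨u₀, hu₀⟩ := G.exists_maximal_degree_vertex
  have hmax : ∀ v, G.degree v ≤ G.degree u₀ := fun v => hu₀ ▸ G.degree_le_maxDegree v
  have key : ∀ {s t : Finset V}, G.IsBipartiteWith ↑s ↑t → #s = m → #t = m → u₀ ∈ s →
      ∑ v, G.degree v ^ 2 + 2 ≤ m ^ 2 + 7 * m := by
    intro s t hst hs ht hu₀s
    have ha : G.degree u₀ ≤ m := ht ▸ isBipartiteWith_degree_le hst hu₀s
    have hL : #G.leafFinset + G.degree u₀ + 1 ≤ 2 * m := by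
      rcases ha.lt_or_eq with ha | ha
      · have := hG.1.preconnected.two_mul_card_leafFinset_le (by omega) hp hpG
        omega
      · have := hG.card_leafFinset_lt_of_isBipartiteWith hm hn hp hpG hst hs ht hu₀s ha
        omega
    simpa using hG.sum_sq_degree_add_two_mul_le hm hn hp hpG (k := 1) le_rfl hmax (by omega) hL
  by_cases hu₀s : u₀ ∈ s
  · exact key hst hs hsc hu₀s
  · exact key hst.symm hsc hs (Finset.mem_compl.2 hu₀s)

end IsUnicyclic

end SimpleGraph

section Digraph

variable {V : Type*} [Fintype V] {A : V → V → Prop}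

theorem M1D_eq_sum_sq (A : V → V → Prop) :
    M1D A = (∑ v, ((outDeg A v : ℚ) ^ 2 + (inDeg A v : ℚ) ^ 2)) / 2 := by
  have hsplit : ∀ u v, (if A u v then (outDeg A u : ℚ) + inDeg A v else 0) =
      (if A u v then (outDeg A u : ℚ) else 0) + (if A u v then (inDeg A v : ℚ) else 0) :=
    fun u v => by split_ifs <;> simp
  have hout : ∀ u, ∑ v, (if A u v then (outDeg A u : ℚ) else 0) = (outDeg A u : ℚ) ^ 2 :=
    fun u => by rw [← Finset.sum_filter, Finset.sum_const, nsmul_eq_mul, ← outDeg, sq]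
  have hin : ∀ v, ∑ u, (if A u v then (inDeg A v : ℚ) else 0) = (inDeg A v : ℚ) ^ 2 :=
    fun v => by rw [← Finset.sum_filter, Finset.sum_const, nsmul_eq_mul, ← inDeg, sq]
  simp only [M1D, hsplit, Finset.sum_add_distrib]
  rw [Finset.sum_comm (f := fun u v => if A u v then (inDeg A v : ℚ) else 0)]
  simp only [hout, hin]
  ring

variable {G : SimpleGraph V}

namespace IsOrientation

theorem degree_eq (hA : IsOrientation G A) (v : V) : G.degree v = outDeg A v + inDeg A v := by
  rw [← G.card_neighborFinset_eq_degree, outDeg, inDeg, ← Finset.card_union_of_disjoint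
    (Finset.disjoint_filter.2 fun w _ h h' => hA.2 v w ⟨h, h'⟩)]
  congr 1
  ext w
  simp [hA.1 v w]

theorem sum_sq_add_two_le_of_not_isSinkSource (hA : IsOrientation G A) (hss : ¬IsSinkSource A) :
    ∑ v, (outDeg A v ^ 2 + inDeg A v ^ 2) + 2 ≤ ∑ v, G.degree v ^ 2 := by
  obtain ⟨v₀, hout, hin⟩ : ∃ v₀, outDeg A v₀ ≠ 0 ∧ inDeg A v₀ ≠ 0 := by
    simpa [IsSinkSource, not_or] using hss
  have hpoint : ∀ v, outDeg A v ^ 2 + inDeg A v ^ 2 + (if v = v₀ then 2 else 0) ≤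
      G.degree v ^ 2 := fun v => by
    rw [hA.degree_eq]
    split_ifs with hv
    · subst hv
      nlinarith [Nat.one_le_iff_ne_zero.2 hout, Nat.one_le_iff_ne_zero.2 hin]
    · nlinarith [Nat.zero_le (outDeg A v * inDeg A v)]
  simpa [Finset.sum_add_distrib] using Finset.sum_le_sum fun v (_ : v ∈ univ) => hpoint v

theorem sum_sq_eq_of_isSinkSource (hA : IsOrientation G A) (hss : IsSinkSource A) :
    ∑ v, (outDeg A v ^ 2 + inDeg A v ^ 2) = ∑ v, G.degree v ^ 2 :=
  Finset.sum_congr rfl fun v _ => by rcases hss v with h | h <;> simp [hA.degree_eq, h]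

theorem isBipartiteWith_of_isSinkSource (hA : IsOrientation G A) (hss : IsSinkSource A) :
    G.IsBipartiteWith ↑(univ.filter fun v => inDeg A v = 0)
      ↑(univ.filter fun v => inDeg A v = 0)ᶜ := by
  have hout : ∀ {u v}, A u v → outDeg A u ≠ 0 := fun {u v} h =>
    (Finset.card_pos.2 ⟨v, by simp [h]⟩).ne'
  have hin : ∀ {u v}, A u v → inDeg A v ≠ 0 := fun {u v} h =>
    (Finset.card_pos.2 ⟨u, by simp [h]⟩).ne'
  refine ⟨by simp [Set.disjoint_left], fun u v huv => ?_⟩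
  rcases (hA.1 u v).1 huv with h | h
  · exact Or.inl ⟨by simpa using (hss u).resolve_left (hout h), by simpa using hin h⟩
  · exact Or.inr ⟨by simpa using hin h, by simpa using (hss v).resolve_left (hout h)⟩

end IsOrientation

end Digraph

theorem stmt4 {V : Type*} [Fintype V] (G : SimpleGraph V) (m : ℕ) (hm : 2 ≤ m)
    (hcard : Fintype.card V = 2 * m) (hconn : G.Connected)
    (huni : G.edgeFinset.card = Fintype.card V)
    (hmatch : MatchingNumberIs G m) (A : V → V → Prop) (hA : IsOrientation G A) :
    M1D A ≤ ((m : ℚ) ^ 2 + 7 * m - 2) / 2 := by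
  obtain ⟨⟨M, hM, hMcard⟩, -⟩ := hmatch
  obtain ⟨p, hp, hpG⟩ := hM.exists_involutive_adj (by rw [hcard, hMcard])
  have hG : G.IsUnicyclic := ⟨hconn, huni⟩
  have hsq : ∑ v, (outDeg A v ^ 2 + inDeg A v ^ 2) + 2 ≤ m ^ 2 + 7 * m := by
    by_cases hss : IsSinkSource A
    · rw [hA.sum_sq_eq_of_isSinkSource hss]
      exact hG.sum_sq_degree_add_two_le_of_isBipartiteWith hm hcard hp hpG
        (hA.isBipartiteWith_of_isSinkSource hss)
    · exact (hA.sum_sq_add_two_le_of_not_isSinkSource hss).trans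
        (hG.sum_sq_degree_le hm hcard hp hpG)
  have hsqQ : ∑ v, ((outDeg A v : ℚ) ^ 2 + (inDeg A v : ℚ) ^ 2) + 2 ≤ (m : ℚ) ^ 2 + 7 * m := by
    exact_mod_cast hsq
  rw [M1D_eq_sum_sq]
  linarith
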